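/- In ℓ² with standard metric ρ, for any ε > 0 there exist a hypothesis class H satisfying the ε-UUS property with respect to ρ and a metric ρ' on ℓ², strongly equivalent to ρ (i.e., there exist constants c, C > 0 with c·ρ(x, y) ≤ ρ'(x, y) ≤ C·ρ(x, y) for all x, y), such that H is (τ, τ)-uniformly generatable with respect to ρ for every τ ∈ (0, ε), but H is not (τ, τ)-non-uniformly generatable with respect to ρ' for any τ ∈ (0, ε). -/

import Mathlib

open Set

namespace Gen

variable {X : Type*}

/-- The support of a hypothesis `h : X → Bool`: its set of positive examples. -/
def supp (h : X → Bool) : Set X := {x | h x = true}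

/-- Closed ball of radius `ε` around `c`, with respect to an explicit distance `ρ`. -/
def ball (ρ : X → X → ℝ) (c : X) (ε : ℝ) : Set X := {y | ρ c y ≤ ε}

/-- Closed `ε`-neighborhood of a set `A`: points whose infimal distance to `A` is `≤ ε`. -/
def setBall (ρ : X → X → ℝ) (A : Set X) (ε : ℝ) : Set X :=
  {y | sInf ((fun a => ρ a y) '' A) ≤ ε}

/-- The `ε`-covering number of `A` with respect to `ρ`, valued in `ℕ∞`
(`⊤` if no finite cover exists). -/
noncomputable def covN (ρ : X → X → ℝ) (ε : ℝ) (A : Set X) : ℕ∞ :=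
  sInf {n : ℕ∞ | ∃ S : Finset X, (S.card : ℕ∞) = n ∧ A ⊆ ⋃ θ ∈ S, ball ρ θ ε}

/-- `H` satisfies the `r`-Uniformly Unbounded Support property w.r.t. `ρ`. -/
def UUS (ρ : X → X → ℝ) (H : Set (X → Bool)) (r : ℝ) : Prop :=
  ∀ h ∈ H, covN ρ r (supp h) = ⊤

/-- The list of the first `s` terms `x 0, …, x (s-1)` of a sequence. -/
def prefList (x : ℕ → X) (s : ℕ) : List X := List.ofFn (fun i : Fin s => x i)

/-- The set of the first `s` terms of a sequence. -/
def prefSet (x : ℕ → X) (s : ℕ) : Set X := x '' Iio s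

/-- `(ε, ε')`-uniform generatability. -/
def UnifGen (ρ : X → X → ℝ) (ε ε' : ℝ) (H : Set (X → Bool)) : Prop :=
  ∃ G : List X → X, ∃ d : ℕ, ∀ h ∈ H, ∀ x : ℕ → X, (∀ i, x i ∈ supp h) →
    ∀ t : ℕ, (d : ℕ∞) ≤ covN ρ ε (prefSet x t) →
      ∀ s ≥ t, G (prefList x s) ∈ supp h \ setBall ρ (prefSet x s) ε'

/-- `(ε, ε')`-non-uniform generatability. -/
def NonUnifGen (ρ : X → X → ℝ) (ε ε' : ℝ) (H : Set (X → Bool)) : Prop :=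
  ∃ G : List X → X, ∀ h ∈ H, ∃ d : ℕ, ∀ x : ℕ → X, (∀ i, x i ∈ supp h) →
    ∀ t : ℕ, (d : ℕ∞) ≤ covN ρ ε (prefSet x t) →
      ∀ s ≥ t, G (prefList x s) ∈ supp h \ setBall ρ (prefSet x s) ε'

/-- `(ε, ε')`-generatability in the limit. -/
def GenInLimit (ρ : X → X → ℝ) (ε ε' : ℝ) (H : Set (X → Bool)) : Prop :=
  ∃ G : List X → X, ∀ h ∈ H, ∀ x : ℕ → X, (∀ i, x i ∈ supp h) →
    supp h ⊆ setBall ρ (range x) ε →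
      ∃ t : ℕ, ∀ s ≥ t, G (prefList x s) ∈ supp h \ setBall ρ (prefSet x s) ε'

/-- The closure `⟨x_1,…,x_t⟩_H` of a finite sample: intersection of the supports of all
hypotheses in the version space. -/
def clos (H : Set (X → Bool)) (l : List X) : Set X :=
  ⋂ h ∈ {h | h ∈ H ∧ ∀ y ∈ l, y ∈ supp h}, supp h

/-- The `(ε, ε')`-closure dimension of `H`, valued in `ℕ∞`. -/
noncomputable def closureDim (ρ : X → X → ℝ) (ε ε' : ℝ) (H : Set (X → Bool)) : ℕ∞ :=
  sSup (insert 0 {d : ℕ∞ | ∃ h ∈ H, ∃ l : List X, (∀ y ∈ l, y ∈ supp h) ∧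
    covN ρ ε {y | y ∈ l} = d ∧ covN ρ ε' (clos H l) ≠ ⊤})

/-- `ρ` is a metric on `X`. -/
def IsMetricDist (ρ : X → X → ℝ) : Prop :=
  (∀ x y, ρ x y = 0 ↔ x = y) ∧ (∀ x y, ρ x y = ρ y x) ∧
    ∀ x y z, ρ x z ≤ ρ x y + ρ y z

/-- `(X, ρ)` is doubling: every closed ball of radius `r` can be covered by at most `M`
closed balls of radius `r / 2`. -/
def Doubling (ρ : X → X → ℝ) : Prop :=
  ∃ M : ℕ, ∀ (x : X) (r : ℝ), 0 < r →
    ∃ S : Finset X, S.card ≤ M ∧ ball ρ x r ⊆ ⋃ θ ∈ S, ball ρ θ (r / 2)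


/-- The real Hilbert space `ℓ²` of square-summable real sequences. -/
noncomputable abbrev ellTwo : Type := lp (fun _ : ℕ => ℝ) 2

/-!
The supports consist of `0`, low points `q e_{4r}` with `0 < q < β`, top points `β e_{4r+1}` with
`r ∈ B`, and a `3ε`-separated family of far points on the coordinates `4r + 2 + j`, which gives UUS.

For the standard metric, a sample not covered by one `τ`-ball either contains a far point, which
reveals `j`, or a point of norm in `(τ, β]`, which bounds `β` from below for every consistent
hypothesis. Either way a far point, resp. a low point of height in `(τ, β)`, on a coordinate unused
by the sample lies in the closure of the sample and is `τ`-far from it.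

`distortedDist` halves the coordinates `4r` and triples the others. Then every low point of height
`< τ` is `τ`-close to `0`, while distinct top points of height `τ` are `3τ` apart. Feed a generator
`0` followed by top points of height `τ` that it has not yet produced: the covering numbers of the
sample grow, but its answers must lie in the supports for both values of `j`, hence in the core,
hence within `τ` of the sample.
-/

namespace IsMetricDist

variable {ρ : X → X → ℝ}

lemma nonneg (hρ : IsMetricDist ρ) (x y : X) : 0 ≤ ρ x y := by
  have := hρ.2.2 x y x
  rw [(hρ.1 x x).2 rfl, hρ.2.1 y x] at this
  linarith

lemma comp {Y : Type*} (hρ : IsMetricDist ρ) {f : Y → X} (hf : Function.Injective f) :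
    IsMetricDist fun x y => ρ (f x) (f y) :=
  ⟨fun _ _ => (hρ.1 _ _).trans hf.eq_iff, fun _ _ => hρ.2.1 _ _, fun _ _ _ => hρ.2.2 _ _ _⟩

end IsMetricDist

lemma isMetricDist_dist {M : Type*} [MetricSpace M] : IsMetricDist (dist : M → M → ℝ) :=
  ⟨fun _ _ => dist_eq_zero, dist_comm, dist_triangle⟩

section Covering

variable {ρ : X → X → ℝ} {ε : ℝ} {A B : Set X}

lemma covN_mono (hAB : A ⊆ B) : covN ρ ε A ≤ covN ρ ε B :=
  sInf_le_sInf fun _ ⟨S, hS, hBS⟩ => ⟨S, hS, hAB.trans hBS⟩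

lemma covN_le_one_of_subset_ball {θ : X} (hA : A ⊆ ball ρ θ ε) : covN ρ ε A ≤ 1 :=
  sInf_le ⟨{θ}, by simp, by simpa using hA⟩

lemma exists_lt_of_two_le_covN (h : 2 ≤ covN ρ ε A) (θ : X) : ∃ y ∈ A, ε < ρ θ y := by
  by_contra! hA
  have := h.trans (covN_le_one_of_subset_ball (θ := θ) hA)
  norm_num at this

lemma natCast_le_covN_of_separated (hρ : IsMetricDist ρ) {u : ℕ → X}
    (hu : Pairwise fun i k => 2 * ε < ρ (u i) (u k)) (n : ℕ) :
    (n : ℕ∞) ≤ covN ρ ε (u '' Iio n) := by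
  refine le_sInf ?_
  rintro _ ⟨S, rfl, hS⟩
  have hcov (i : ℕ) (hi : i < n) : ∃ θ ∈ S, ρ θ (u i) ≤ ε := by
    simpa [ball] using hS ⟨i, hi, rfl⟩
  have : Nonempty X := ⟨u 0⟩
  choose! center hcenterS hcenter using hcov
  have hinj : InjOn center (Finset.range n : Set ℕ) := by
    intro i hi k hk hik
    by_contra hne
    have htri := hρ.2.2 (u i) (center i) (u k)
    rw [hρ.2.1 (u i) (center i)] at htri
    have hk' : ρ (center i) (u k) ≤ ε := hik ▸ hcenter k (by simpa using hk)
    linarith [hu hne, hcenter i (by simpa using hi)]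
  have := Finset.card_le_card_of_injOn center (fun i hi => hcenterS i (by simpa using hi)) hinj
  simpa using this

lemma covN_eq_top_of_separated (hρ : IsMetricDist ρ) {u : ℕ → X}
    (hu : Pairwise fun i k => 2 * ε < ρ (u i) (u k)) (huA : ∀ i, u i ∈ A) :
    covN ρ ε A = ⊤ :=
  ENat.eq_top_iff_forall_ge.2 fun n =>
    (natCast_le_covN_of_separated hρ hu n).trans (covN_mono (by rintro _ ⟨i, -, rfl⟩; exact huA i))

lemma mem_setBall_of_mem (hρ : IsMetricDist ρ) {a z : X} (ha : a ∈ A) (h : ρ a z ≤ ε) :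
    z ∈ setBall ρ A ε := by
  have hbdd : BddBelow ((fun b => ρ b z) '' A) := ⟨0, by rintro _ ⟨b, -, rfl⟩; exact hρ.nonneg b z⟩
  exact (csInf_le hbdd ⟨a, ha, rfl⟩).trans h

/-- Nonemptiness is needed: `sInf ∅ = 0`, so `setBall ρ ∅ ε` is everything when `0 ≤ ε`. -/
lemma notMem_setBall {z : X} {b : ℝ} (hA : A.Nonempty) (hb : ε < b)
    (h : ∀ a ∈ A, b ≤ ρ a z) : z ∉ setBall ρ A ε := fun hz =>
  (hb.trans_le (le_csInf (hA.image _) (by rintro _ ⟨a, ha, rfl⟩; exact h a ha))).not_ge hz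

end Covering

section Prefix

variable {x y : ℕ → X} {s : ℕ}

lemma setOf_mem_prefList : {z | z ∈ prefList x s} = prefSet x s := by
  ext z
  simp only [prefList, List.mem_ofFn, prefSet, mem_ofPred_eq, mem_image, mem_Iio]
  exact ⟨fun ⟨i, hi⟩ => ⟨i, i.2, hi⟩, fun ⟨i, hi, hiz⟩ => ⟨⟨i, hi⟩, hiz⟩⟩

lemma prefSet_mono {t : ℕ} (hts : t ≤ s) : prefSet x t ⊆ prefSet x s :=
  image_mono fun _ hi => lt_of_lt_of_le hi hts

lemma mem_prefSet {i : ℕ} (hi : i < s) : x i ∈ prefSet x s := ⟨i, hi, rfl⟩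

lemma prefList_congr (h : ∀ i < s, x i = y i) : prefList x s = prefList y s :=
  congrArg List.ofFn (funext fun i => h i i.2)

end Prefix

lemma unifGen_of_nonempty_clos_diff [Nonempty X] {ρ : X → X → ℝ} {ε ε' : ℝ}
    {H : Set (X → Bool)} (d : ℕ)
    (hH : ∀ h ∈ H, ∀ l : List X, (∀ y ∈ l, y ∈ supp h) → (d : ℕ∞) ≤ covN ρ ε {y | y ∈ l} →
      (clos H l \ setBall ρ {y | y ∈ l} ε').Nonempty) :
    UnifGen ρ ε ε' H := by
  refine ⟨fun l => Classical.epsilon (· ∈ clos H l \ setBall ρ {y | y ∈ l} ε'), d, ?_⟩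
  intro h hH' x hx t ht s hts
  have hl : ∀ y ∈ prefList x s, y ∈ supp h := by
    intro y hy
    obtain ⟨i, -, rfl⟩ := (setOf_mem_prefList ▸ hy : y ∈ prefSet x s)
    exact hx i
  have hd : (d : ℕ∞) ≤ covN ρ ε {y | y ∈ prefList x s} :=
    setOf_mem_prefList ▸ ht.trans (covN_mono (prefSet_mono hts))
  obtain ⟨hclos, hfar⟩ := Classical.epsilon_spec (hH h hH' _ hl hd)
  exact ⟨mem_iInter₂.1 hclos h ⟨hH', hl⟩, setOf_mem_prefList ▸ hfar⟩

section Diagonal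

variable (G : List X → X) (x₀ : X) {p : ℕ → X}

def forbidden (s : ℕ → X) (i : ℕ) : Set X :=
  s '' Iic i ∪ (fun j => G (prefList s j)) '' Iic (i + 1)

lemma forbidden_finite (s : ℕ → X) (i : ℕ) : (forbidden G s i).Finite :=
  ((finite_Iic i).image s).union ((finite_Iic (i + 1)).image _)

lemma forbidden_congr {s s' : ℕ → X} {i : ℕ} (h : ∀ m ≤ i, s m = s' m) :
    forbidden G s i = forbidden G s' i := by
  unfold forbidden
  congr 1
  · exact image_congr fun m hm => h m hm
  · exact image_congr fun j hj => congrArg G (prefList_congr fun m hm => h m (by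
      rw [mem_Iic] at hj; omega))

noncomputable def freshIndex (hp : Function.Injective p) (s : ℕ → X) (i : ℕ) : ℕ :=
  ((forbidden_finite G s i).preimage hp.injOn).exists_notMem.choose

lemma freshIndex_spec (hp : Function.Injective p) (s : ℕ → X) (i : ℕ) :
    p (freshIndex G hp s i) ∉ forbidden G s i :=
  ((forbidden_finite G s i).preimage hp.injOn).exists_notMem.choose_spec

/-- Only `diagSeq hp m` for `m ≤ i` matters to `forbidden _ _ i`; truncating the sequence there
makes the recursion well founded. -/
noncomputable def diagSeq (hp : Function.Injective p) : ℕ → X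
  | 0 => x₀
  | i + 1 => p (freshIndex G hp (fun m => if m ≤ i then diagSeq hp m else x₀) i)

lemma diagSeq_succ (hp : Function.Injective p) (i : ℕ) :
    diagSeq G x₀ hp (i + 1) ∉ forbidden G (diagSeq G x₀ hp) i := by
  rw [diagSeq, ← forbidden_congr G fun m hm => if_pos hm]
  exact freshIndex_spec G hp _ i

lemma diagSeq_injective (hp : Function.Injective p) : Function.Injective (diagSeq G x₀ hp) := by
  refine Function.Injective.of_lt_imp_ne fun m n hmn h => ?_
  obtain ⟨i, rfl⟩ : ∃ i, n = i + 1 := Nat.exists_eq_succ_of_ne_zero (by omega)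
  exact diagSeq_succ G x₀ hp i (Or.inl ⟨m, by simpa using Nat.le_of_lt_succ hmn, h⟩)

theorem exists_seq_avoiding_generator (hp : Function.Injective p) :
    ∃ (x : ℕ → X) (k : ℕ → ℕ), x 0 = x₀ ∧ Function.Injective k ∧ (∀ i, x (i + 1) = p (k i)) ∧
      ∀ s i, G (prefList x s) = x (i + 1) → i + 1 < s := by
  have hx_succ (i : ℕ) : ∃ k, diagSeq G x₀ hp (i + 1) = p k := ⟨_, by rw [diagSeq]⟩
  choose k hk using hx_succ
  refine ⟨diagSeq G x₀ hp, k, by rw [diagSeq], fun m n h => ?_, hk, fun s i hs => ?_⟩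
  · simpa using diagSeq_injective G x₀ hp
      (show diagSeq G x₀ hp (m + 1) = diagSeq G x₀ hp (n + 1) by rw [hk, hk, h])
  · by_contra! hsi
    exact diagSeq_succ G x₀ hp i (Or.inr ⟨s, by simpa using hsi, hs⟩)

end Diagonal

section EllTwo

lemma abs_le_dist_single {y : ellTwo} {n : ℕ} (hy : y n = 0) (a : ℝ) :
    |a| ≤ dist y (lp.single 2 n a) := by
  have := lp.norm_apply_le_norm (by norm_num) (y - lp.single 2 n a) n
  rwa [lp.coeFn_sub, Pi.sub_apply, hy, lp.single_apply_self, zero_sub, norm_neg,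
    ← dist_eq_norm] at this

lemma single_left_injective {a : ℝ} (ha : a ≠ 0) :
    Function.Injective fun n => (lp.single 2 n a : ellTwo) := fun m n h => by
  by_contra hmn
  have := congrArg (· m) h
  simp only [lp.single_apply_self, lp.single_apply_ne (E := fun _ : ℕ => ℝ) 2 n a hmn] at this
  exact ha this

lemma exists_forall_apply_eq_zero (l : List ellTwo) (hl : ∀ y ∈ l, ∃ n a, y = lp.single 2 n a) :
    ∃ N, ∀ y ∈ l, ∀ n ≥ N, y n = 0 := by
  induction l with
  | nil => exact ⟨0, by simp⟩
  | cons y l ih =>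
    obtain ⟨N, hN⟩ := ih fun z hz => hl z (List.mem_cons_of_mem y hz)
    obtain ⟨m, a, rfl⟩ := hl y List.mem_cons_self
    refine ⟨max N (m + 1), fun z hz n hn => ?_⟩
    rcases List.mem_cons.1 hz with rfl | hz
    · exact lp.single_apply_ne (E := fun _ : ℕ => ℝ) 2 m a (by omega)
    · exact hN z hz n (by omega)

end EllTwo

section Distortion

noncomputable def distortionWeight (n : ℕ) : ℝ := if n % 4 = 0 then 2⁻¹ else 3

lemma abs_distortionWeight_le (n : ℕ) : |distortionWeight n| ≤ 3 := by
  unfold distortionWeight; split_ifs <;> norm_num [abs_of_pos]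

lemma one_le_two_mul_abs_distortionWeight (n : ℕ) : 1 ≤ 2 * |distortionWeight n| := by
  unfold distortionWeight; split_ifs <;> norm_num [abs_of_pos]

noncomputable def distortion : ellTwo →L[ℝ] ellTwo :=
  lp.mapCLM 2 (fun n => distortionWeight n • ContinuousLinearMap.id ℝ ℝ) (K := 3) (by norm_num)
    fun n => by
      rw [norm_smul, Real.norm_eq_abs]
      exact (mul_le_of_le_one_right (abs_nonneg _) ContinuousLinearMap.norm_id_le).trans
        (abs_distortionWeight_le n)

lemma distortion_apply (f : ellTwo) (n : ℕ) : distortion f n = distortionWeight n * f n := by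
  simp [distortion]

lemma distortion_single (n : ℕ) (a : ℝ) :
    distortion (lp.single 2 n a) = lp.single 2 n (distortionWeight n * a) := by
  ext m
  rw [distortion_apply]
  rcases eq_or_ne m n with rfl | hmn
  · simp only [lp.single_apply_self]
  · simp only [lp.single_apply_ne _ _ _ hmn, mul_zero]

lemma norm_distortion_le (f : ellTwo) : ‖distortion f‖ ≤ 3 * ‖f‖ :=
  (distortion.le_opNorm f).trans <|
    mul_le_mul_of_nonneg_right (lp.norm_mapCLM_le _ _ _ _ : ‖distortion‖ ≤ 3) (norm_nonneg f)

lemma norm_le_two_mul_norm_distortion (f : ellTwo) : ‖f‖ ≤ 2 * ‖distortion f‖ := by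
  rw [← abs_two, ← Real.norm_eq_abs, ← lp.norm_const_smul (by norm_num)]
  refine lp.norm_mono (by norm_num) fun n => ?_
  rw [lp.coeFn_smul, Pi.smul_apply, distortion_apply, smul_eq_mul, norm_mul, norm_mul,
    Real.norm_two, ← mul_assoc, Real.norm_eq_abs (distortionWeight n)]
  exact le_mul_of_one_le_left (norm_nonneg _) (one_le_two_mul_abs_distortionWeight n)

lemma distortion_injective : Function.Injective distortion := by
  refine (injective_iff_map_eq_zero distortion).2 fun f hf => norm_le_zero_iff.1 ?_
  simpa [hf] using norm_le_two_mul_norm_distortion f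

noncomputable def distortedDist (x y : ellTwo) : ℝ := dist (distortion x) (distortion y)

lemma isMetricDist_distortedDist : IsMetricDist distortedDist :=
  isMetricDist_dist.comp distortion_injective

lemma distortedDist_eq_norm (x y : ellTwo) : distortedDist x y = ‖distortion (x - y)‖ := by
  rw [distortedDist, dist_eq_norm, map_sub]

lemma half_mul_dist_le_distortedDist (x y : ellTwo) : 1 / 2 * dist x y ≤ distortedDist x y := by
  rw [distortedDist_eq_norm, dist_eq_norm]
  linarith [norm_le_two_mul_norm_distortion (x - y)]

lemma distortedDist_le (x y : ellTwo) : distortedDist x y ≤ 3 * dist x y := by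
  rw [distortedDist_eq_norm, dist_eq_norm]
  exact norm_distortion_le (x - y)

lemma distortedDist_zero_single_four_mul (r : ℕ) (q : ℝ) :
    distortedDist 0 (lp.single 2 (4 * r) q) = |q| / 2 := by
  rw [distortedDist, map_zero, distortion_single, dist_zero_left,
    lp.norm_single (by norm_num), distortionWeight, if_pos (by omega), Real.norm_eq_abs, abs_mul,
    abs_of_pos (by norm_num : (0 : ℝ) < 2⁻¹)]
  ring

lemma three_mul_abs_le_distortedDist_single {r r' : ℕ} (hrr' : r ≠ r') (a : ℝ) :
    3 * |a| ≤ distortedDist (lp.single 2 (4 * r + 1) a) (lp.single 2 (4 * r' + 1) a) := by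
  have hw (k : ℕ) : distortionWeight (4 * k + 1) = 3 := if_neg (by omega)
  rw [distortedDist, distortion_single, distortion_single, hw, hw]
  simpa [abs_mul] using abs_le_dist_single (lp.single_apply_ne 2 _ _ (by omega)) (3 * a)

end Distortion

open Classical in
noncomputable def indicatorHyp (S : Set X) : X → Bool := fun y => decide (y ∈ S)

lemma supp_indicatorHyp (S : Set X) : supp (indicatorHyp S) = S := by
  ext y
  simp [supp, indicatorHyp]

section HypClass

def lowPoints (β : ℝ) : Set ellTwo := {z | ∃ q r, 0 < q ∧ q < β ∧ z = lp.single 2 (4 * r) q}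

def topPoints (β : ℝ) (B : Set ℕ) : Set ellTwo := (fun r => lp.single 2 (4 * r + 1) β) '' B

def farPoints (ε : ℝ) (j : Bool) : Set ellTwo :=
  range fun r => lp.single 2 (4 * r + 2 + j.toNat) (3 * ε)

def core (β : ℝ) (B : Set ℕ) : Set ellTwo := insert 0 (lowPoints β ∪ topPoints β B)

def suppSet (ε β : ℝ) (B : Set ℕ) (j : Bool) : Set ellTwo := core β B ∪ farPoints ε j

def hypClass (ε : ℝ) : Set (ellTwo → Bool) :=
  {h | ∃ β B j, 0 < β ∧ β < ε ∧ h = indicatorHyp (suppSet ε β B j)}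

variable {ε β : ℝ} {B : Set ℕ} {j j' : Bool} {z : ellTwo}

lemma norm_le_of_mem_core (hβ : 0 ≤ β) (hz : z ∈ core β B) : ‖z‖ ≤ β := by
  rcases hz with rfl | ⟨q, r, hq, hqβ, rfl⟩ | ⟨r, -, rfl⟩
  · simpa using hβ
  · rw [lp.norm_single (by norm_num), Real.norm_eq_abs, abs_of_pos hq]
    exact hqβ.le
  · rw [lp.norm_single (by norm_num), Real.norm_eq_abs, abs_of_nonneg hβ]

lemma norm_of_mem_farPoints (hz : z ∈ farPoints ε j) : ‖z‖ = |3 * ε| := by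
  obtain ⟨r, rfl⟩ := hz
  rw [lp.norm_single (by norm_num), Real.norm_eq_abs]

lemma mem_core_of_norm_lt (hz : z ∈ suppSet ε β B j) (h : ‖z‖ < 3 * ε) : z ∈ core β B :=
  hz.resolve_right fun hfar => (h.trans_le (le_abs_self _)).ne (norm_of_mem_farPoints hfar)

lemma eq_of_mem_farPoints (hε : ε ≠ 0) (hz : z ∈ farPoints ε j) (hz' : z ∈ farPoints ε j') :
    j = j' := by
  obtain ⟨r, rfl⟩ := hz
  obtain ⟨r', hr'⟩ := hz'
  have := single_left_injective (mul_ne_zero three_ne_zero hε) hr'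
  cases j <;> cases j' <;> simp at this ⊢ <;> omega

lemma mem_core_of_mem_suppSet_of_ne (hε : ε ≠ 0) (hjj' : j ≠ j') (hz : z ∈ suppSet ε β B j)
    (hz' : z ∈ suppSet ε β B j') : z ∈ core β B := by
  rcases hz with hz | hfar
  · exact hz
  rcases hz' with hz' | hfar'
  · exact hz'
  exact absurd (eq_of_mem_farPoints hε hfar hfar') hjj'

lemma exists_eq_single_of_mem_suppSet (hz : z ∈ suppSet ε β B j) :
    ∃ n a, z = lp.single 2 n a := by
  rcases hz with (rfl | ⟨q, r, -, -, rfl⟩ | ⟨r, -, rfl⟩) | ⟨r, rfl⟩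
  · exact ⟨0, 0, (lp.single_zero 2 0).symm⟩
  all_goals exact ⟨_, _, rfl⟩

lemma mem_clos_hypClass {l : List ellTwo}
    (h : ∀ β B j, 0 < β → β < ε → (∀ y ∈ l, y ∈ suppSet ε β B j) → z ∈ suppSet ε β B j) :
    z ∈ clos (hypClass ε) l := by
  refine mem_iInter₂.2 ?_
  rintro _ ⟨⟨β, B, j, hβ, hβε, rfl⟩, hl⟩
  simp only [supp_indicatorHyp] at hl ⊢
  exact h β B j hβ hβε hl

end HypClass

lemma uus_hypClass {ε : ℝ} (hε : 0 < ε) : UUS dist (hypClass ε) ε := by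
  rintro _ ⟨β, B, j, -, -, rfl⟩
  rw [supp_indicatorHyp]
  refine covN_eq_top_of_separated isMetricDist_dist (fun r r' hrr' => ?_) fun r => Or.inr ⟨r, rfl⟩
  have := abs_le_dist_single (lp.single_apply_ne 2 (4 * r + 2 + j.toNat) (3 * ε)
    (show 4 * r' + 2 + j.toNat ≠ _ by omega)) (3 * ε)
  rw [abs_of_pos (by positivity)] at this
  linarith

lemma nonempty_clos_hypClass_diff_setBall {ε τ : ℝ} (hτ : 0 < τ) (hτε : τ < ε)
    {h : ellTwo → Bool} (hh : h ∈ hypClass ε) (l : List ellTwo) (hl : ∀ y ∈ l, y ∈ supp h)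
    (hcov : 2 ≤ covN dist τ {y | y ∈ l}) :
    (clos (hypClass ε) l \ setBall dist {y | y ∈ l} τ).Nonempty := by
  obtain ⟨β, B, j, hβ, hβε, rfl⟩ := hh
  simp only [supp_indicatorHyp] at hl
  obtain ⟨N, hN⟩ := exists_forall_apply_eq_zero l fun y hy =>
    exists_eq_single_of_mem_suppSet (hl y hy)
  obtain ⟨y₀, hy₀, hy₀τ⟩ := exists_lt_of_two_le_covN hcov 0
  rw [dist_zero_left] at hy₀τ
  suffices ∃ n a, N ≤ n ∧ τ < a ∧ lp.single 2 n a ∈ clos (hypClass ε) l by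
    obtain ⟨n, a, hn, hτa, hclos⟩ := this
    exact ⟨_, hclos, notMem_setBall ⟨y₀, hy₀⟩ hτa fun y hy =>
      (le_abs_self a).trans (abs_le_dist_single (hN y hy n hn) a)⟩
  by_cases hfar : ∃ y ∈ l, y ∈ farPoints ε j
  · obtain ⟨y₁, hy₁, hy₁far⟩ := hfar
    refine ⟨4 * N + 2 + j.toNat, 3 * ε, by omega, by linarith,
      mem_clos_hypClass fun β' B' j' hβ' hβ'ε hl' => Or.inr ?_⟩
    rcases hl' y₁ hy₁ with hcore | hfar'
    · have := norm_le_of_mem_core hβ'.le hcore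
      rw [norm_of_mem_farPoints hy₁far, abs_of_pos (by linarith)] at this
      linarith
    · rw [← eq_of_mem_farPoints (by linarith) hy₁far hfar']
      exact ⟨N, rfl⟩
  · push Not at hfar
    have hy₀β := norm_le_of_mem_core hβ.le ((hl y₀ hy₀).resolve_right (hfar y₀ hy₀))
    refine ⟨4 * N, (τ + ‖y₀‖) / 2, by omega, by linarith,
      mem_clos_hypClass fun β' B' j' hβ' hβ'ε hl' => Or.inl ?_⟩
    have := norm_le_of_mem_core hβ'.le (mem_core_of_norm_lt (hl' y₀ hy₀) (by linarith))
    exact mem_insert_of_mem _ (Or.inl ⟨_, N, by linarith, by linarith, rfl⟩)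

lemma unifGen_hypClass {ε τ : ℝ} (hτ : 0 < τ) (hτε : τ < ε) : UnifGen dist τ τ (hypClass ε) :=
  unifGen_of_nonempty_clos_diff 2 fun _ hh l hl hcov =>
    nonempty_clos_hypClass_diff_setBall hτ hτε hh l hl hcov

lemma mem_setBall_distortedDist_of_mem_core {τ : ℝ} (hτ : 0 ≤ τ) {B : Set ℕ} {A : Set ellTwo}
    {z : ellTwo} (hA : 0 ∈ A) (hz : z ∈ core τ B) (htop : z ∈ topPoints τ B → z ∈ A) :
    z ∈ setBall distortedDist A τ := by
  rcases hz with rfl | ⟨q, r, hq, hqτ, rfl⟩ | htop'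
  · exact mem_setBall_of_mem isMetricDist_distortedDist hA
      ((isMetricDist_distortedDist.1 0 0).2 rfl ▸ hτ)
  · refine mem_setBall_of_mem isMetricDist_distortedDist hA ?_
    rw [distortedDist_zero_single_four_mul, abs_of_pos hq]
    linarith
  · exact mem_setBall_of_mem isMetricDist_distortedDist (htop htop')
      ((isMetricDist_distortedDist.1 z z).2 rfl ▸ hτ)

lemma natCast_le_covN_distortedDist_prefSet {τ : ℝ} (hτ : 0 < τ) {x : ℕ → ellTwo} {k : ℕ → ℕ}
    (hk_inj : Function.Injective k) (hk : ∀ i, x (i + 1) = lp.single 2 (4 * k i + 1) τ) (d : ℕ) :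
    (d : ℕ∞) ≤ covN distortedDist τ (prefSet x (d + 1)) := by
  refine (natCast_le_covN_of_separated isMetricDist_distortedDist (u := fun i => x (i + 1))
    (fun i i' hii' => ?_) d).trans (covN_mono ?_)
  · have := three_mul_abs_le_distortedDist_single (hk_inj.ne hii') τ
    rw [← hk, ← hk, abs_of_pos hτ] at this
    exact (by linarith : 2 * τ < distortedDist (x (i + 1)) (x (i' + 1)))
  · rintro _ ⟨i, hi, rfl⟩
    exact mem_prefSet (by rw [mem_Iio] at hi; omega)

lemma not_nonUnifGen_hypClass {ε τ : ℝ} (hτ : 0 < τ) (hτε : τ < ε) :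
    ¬ NonUnifGen distortedDist τ τ (hypClass ε) := by
  rintro ⟨G, hG⟩
  have htop_inj : Function.Injective fun r => (lp.single 2 (4 * r + 1) τ : ellTwo) :=
    fun r r' h => by simpa using single_left_injective hτ.ne' h
  obtain ⟨x, k, hx0, hk_inj, hk, hx_new⟩ := exists_seq_avoiding_generator G 0 htop_inj
  set B := range k
  have hx_supp (j : Bool) (i : ℕ) : x i ∈ supp (indicatorHyp (suppSet ε τ B j)) := by
    rw [supp_indicatorHyp]
    cases i with
    | zero => exact Or.inl (hx0 ▸ mem_insert 0 _)
    | succ i => exact Or.inl (mem_insert_of_mem _ (Or.inr ⟨k i, mem_range_self i, (hk i).symm⟩))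
  have hcov := natCast_le_covN_distortedDist_prefSet hτ hk_inj hk
  obtain ⟨d₀, hd₀⟩ := hG _ ⟨τ, B, false, hτ, hτε, rfl⟩
  obtain ⟨d₁, hd₁⟩ := hG _ ⟨τ, B, true, hτ, hτε, rfl⟩
  set s := d₀ + d₁ + 1
  obtain ⟨hz₀, hz_far⟩ := hd₀ x (hx_supp false) (d₀ + 1) (hcov d₀) s (by omega)
  obtain ⟨hz₁, -⟩ := hd₁ x (hx_supp true) (d₁ + 1) (hcov d₁) s (by omega)
  rw [supp_indicatorHyp] at hz₀ hz₁
  refine hz_far (mem_setBall_distortedDist_of_mem_core hτ.le (hx0 ▸ mem_prefSet (by omega))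
    (mem_core_of_mem_suppSet_of_ne (by linarith) Bool.false_ne_true hz₀ hz₁) ?_)
  rintro ⟨_, ⟨i, rfl⟩, hz⟩
  have hz' : x (i + 1) = G (prefList x s) := (hk i).trans hz
  exact hz' ▸ mem_prefSet (hx_new s i hz'.symm)

/-- in `ℓ²`, generatability is metric-dependent: a class can be uniformly
generatable under the standard metric but not non-uniformly generatable under a strongly
equivalent metric. -/
theorem exists_metric_dependent_gen_l2 (ε : ℝ) (hε : 0 < ε) :
    ∃ (H : Set (ellTwo → Bool)) (ρ' : ellTwo → ellTwo → ℝ),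
      UUS dist H ε ∧ IsMetricDist ρ' ∧
      (∃ c C : ℝ, 0 < c ∧ 0 < C ∧
        ∀ x y : ellTwo, c * dist x y ≤ ρ' x y ∧ ρ' x y ≤ C * dist x y) ∧
      (∀ τ : ℝ, 0 < τ → τ < ε → UnifGen dist τ τ H) ∧
      (∀ τ : ℝ, 0 < τ → τ < ε → ¬ NonUnifGen ρ' τ τ H) :=
  ⟨hypClass ε, distortedDist, uus_hypClass hε, isMetricDist_distortedDist,
    ⟨1 / 2, 3, by norm_num, by norm_num, fun x y =>
      ⟨half_mul_dist_le_distortedDist x y, distortedDist_le x y⟩⟩,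
    fun _ hτ hτε => unifGen_hypClass hτ hτε, fun _ hτ hτε => not_nonUnifGen_hypClass hτ hτε⟩

end Gen
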